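/- For every integer k ≥ 1 and all x ∈ ℝ, one has [2]_q · Σ_{j=0}^{⌊k/2⌋} C(k,2j)·Ẽ_{2k-2j}(x) + (q−1) · Σ_{j=0}^{⌊k/2⌋} C(k,2j+1)·Ẽ_{2k-2j-1}(x) = [2]_q · x^k·(x−1)^k, where C(n,j) denotes the binomial coefficient (equal to 0 when j > n) and ⌊·⌋ is the floor function. -/

import Mathlib

/-!
Let `L` be the linear functional on `ℝ[X]` sending `X ^ n` to `Ẽ_n`, so that
`Ẽ_n(x) = L((X + x) ^ n)`. The recurrence defining the `Ẽ_n` says exactly that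
`q · L(p(X + 1)) + L(p) = [2]_q · p(0)` for every polynomial `p`. Apply this to
`p = Y ^ k (Y - 1) ^ k` with `Y = X + x`: then `p(X + 1) = Y ^ k (Y + 1) ^ k`, and expanding
`Y ^ k (Y ± 1) ^ k` binomially turns the left-hand side into
`Σ_m (q + (-1) ^ m) C(k, m) Ẽ_{2k-m}(x)`, which is the claimed sum split by the parity of `m`.
-/

open Finset Polynomial

lemma sum_range_two_mul {M : Type*} [AddCommMonoid M] (f : ℕ → M) (n : ℕ) :
    ∑ m ∈ range (2 * n), f m
      = ∑ j ∈ range n, f (2 * j) + ∑ j ∈ range n, f (2 * j + 1) := by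
  induction n with
  | zero => simp
  | succ n ih =>
    rw [show 2 * (n + 1) = 2 * n + 1 + 1 by ring, sum_range_succ, sum_range_succ, ih,
      sum_range_succ, sum_range_succ]
    abel

lemma sum_range_succ_eq_sum_even_add_sum_odd {M : Type*} [AddCommMonoid M] {f : ℕ → M} {n : ℕ}
    (hf : ∀ m, n < m → f m = 0) :
    ∑ m ∈ range (n + 1), f m
      = ∑ j ∈ range (n / 2 + 1), f (2 * j) + ∑ j ∈ range (n / 2 + 1), f (2 * j + 1) := by
  rw [← sum_range_two_mul]
  refine sum_subset (fun m hm => ?_) (fun m _ hm => hf m (by simpa using hm))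
  simp only [mem_range] at hm ⊢
  omega

lemma pow_mul_add_pow_eq_sum {A : Type*} [CommSemiring A] (y a : A) (k : ℕ) :
    y ^ k * (y + a) ^ k = ∑ m ∈ range (k + 1), a ^ m * k.choose m * y ^ (2 * k - m) := by
  rw [add_comm y a, add_pow, mul_sum]
  refine sum_congr rfl fun m hm => ?_
  rw [show 2 * k - m = k + (k - m) by simp only [mem_range] at hm; omega, pow_add]
  ring

namespace Polynomial

section Umbral

variable {R : Type*} [CommRing R] (E : ℕ → R)

noncomputable def umbral : R[X] →ₗ[R] R :=
  lsum fun n => LinearMap.toSpanSingleton R R (E n)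

lemma umbral_monomial (n : ℕ) (a : R) : umbral E (monomial n a) = a * E n := by
  simp [umbral, sum_monomial_index, smul_eq_mul]

lemma umbral_X_pow (n : ℕ) : umbral E (X ^ n) = E n := by
  rw [X_pow_eq_monomial, umbral_monomial, one_mul]

lemma umbral_C_mul (a : R) (p : R[X]) : umbral E (C a * p) = a * umbral E p := by
  rw [← smul_eq_C_mul, map_smul, smul_eq_mul]

lemma umbral_X_add_C_pow (x : R) (n : ℕ) :
    umbral E ((X + C x) ^ n) = ∑ l ∈ range (n + 1), (n.choose l : R) * E (n - l) * x ^ l := by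
  rw [add_comm, add_pow, map_sum]
  refine sum_congr rfl fun l _ => ?_
  rw [← C_pow, ← C_eq_natCast, mul_right_comm, ← C_mul, umbral_C_mul, umbral_X_pow]
  ring

lemma umbral_X_add_one_pow (n : ℕ) :
    umbral E ((X + 1) ^ n) = ∑ j ∈ range (n + 1), (n.choose j : R) * E j := by
  rw [add_pow, map_sum]
  refine sum_congr rfl fun j _ => ?_
  rw [one_pow, mul_one, ← C_eq_natCast, mul_comm, umbral_C_mul, umbral_X_pow]

lemma umbral_pow_mul_add_C_pow (y : R[X]) (a : R) (k : ℕ) :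
    umbral E (y ^ k * (y + C a) ^ k)
      = ∑ m ∈ range (k + 1), a ^ m * k.choose m * umbral E (y ^ (2 * k - m)) := by
  rw [pow_mul_add_pow_eq_sum, map_sum]
  refine sum_congr rfl fun m _ => ?_
  rw [← C_pow, ← C_eq_natCast, ← C_mul, umbral_C_mul]

variable {E}

lemma umbral_comp_X_add_one {q : R} (hE0 : E 0 = 1)
    (hE : ∀ n : ℕ, 1 ≤ n → q * ∑ j ∈ range (n + 1), (n.choose j : R) * E j + E n = 0)
    (p : R[X]) :
    q * umbral E (p.comp (X + 1)) + umbral E p = (1 + q) * p.eval 0 := by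
  induction p using Polynomial.induction_on' with
  | add p r hp hr =>
    simp only [add_comp, map_add, eval_add]
    linear_combination hp + hr
  | monomial n a =>
    have hX_pow : q * umbral E ((X + 1) ^ n) + E n = (1 + q) * 0 ^ n := by
      rw [umbral_X_add_one_pow]
      rcases Nat.eq_zero_or_pos n with rfl | hn
      · simp only [zero_add, sum_range_one, Nat.choose_self, Nat.cast_one, one_mul, hE0, pow_zero]
        ring
      · rw [zero_pow hn.ne', mul_zero]
        exact hE n hn
    rw [← C_mul_X_pow_eq_monomial, mul_comp, C_comp, X_pow_comp, umbral_C_mul, umbral_C_mul,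
      umbral_X_pow, eval_mul, eval_C, eval_pow, eval_X]
    linear_combination a * hX_pow

end Umbral

end Polynomial

theorem stmt_5_general (q : ℝ)
    (E : ℕ → ℝ) (hE0 : E 0 = 1)
    (hE : ∀ n : ℕ, 1 ≤ n →
      q * ∑ j ∈ range (n + 1), (n.choose j : ℝ) * E j + E n = 0)
    (Ep : ℕ → ℝ → ℝ)
    (hEp : ∀ (n : ℕ) (x : ℝ),
      Ep n x = ∑ l ∈ range (n + 1), (n.choose l : ℝ) * E (n - l) * x ^ l)
    (k : ℕ) (x : ℝ) :
    (1 + q) * ∑ j ∈ range (k / 2 + 1), (k.choose (2 * j) : ℝ) * Ep (2 * k - 2 * j) x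
      + (q - 1) * ∑ j ∈ range (k / 2 + 1),
          (k.choose (2 * j + 1) : ℝ) * Ep (2 * k - 2 * j - 1) x
    = (1 + q) * x ^ k * (x - 1) ^ k := by
  set Y : ℝ[X] := X + C x
  have hEpY (n : ℕ) : Ep n x = umbral E (Y ^ n) := by rw [hEp, umbral_X_add_C_pow]
  have hshift : (Y ^ k * (Y + C (-1)) ^ k).comp (X + 1) = Y ^ k * (Y + C 1) ^ k := by
    simp only [Y, mul_comp, pow_comp, add_comp, X_comp, C_comp, C_neg, C_1, neg_comp, one_comp]
    rw [mul_comm]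
    congr 2 <;> ring
  calc _ = ∑ m ∈ range (k + 1), (q * 1 ^ m + (-1) ^ m) * k.choose m * Ep (2 * k - m) x := by
        rw [sum_range_succ_eq_sum_even_add_sum_odd (n := k) fun m hm => by
          rw [Nat.choose_eq_zero_of_lt hm, Nat.cast_zero, mul_zero, zero_mul], mul_sum, mul_sum]
        congr 1 <;> refine sum_congr rfl fun j _ => ?_
        · rw [Even.neg_one_pow ⟨j, two_mul j⟩]
          ring
        · rw [Odd.neg_one_pow ⟨j, rfl⟩, ← Nat.sub_sub]
          ring
    _ = q * umbral E ((Y ^ k * (Y + C (-1)) ^ k).comp (X + 1))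
          + umbral E (Y ^ k * (Y + C (-1)) ^ k) := by
        rw [hshift, umbral_pow_mul_add_C_pow, umbral_pow_mul_add_C_pow, mul_sum,
          ← sum_add_distrib]
        refine sum_congr rfl fun m _ => ?_
        rw [hEpY]
        ring
    _ = (1 + q) * (Y ^ k * (Y + C (-1)) ^ k).eval 0 := by
        rw [umbral_comp_X_add_one hE0 hE]
    _ = (1 + q) * x ^ k * (x - 1) ^ k := by
        simp only [Y, eval_mul, eval_pow, eval_add, eval_X, eval_C]
        ring

theorem stmt_5 (q : ℝ) (hq0 : q ≠ 0) (hq1 : q ≠ -1)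
    (E : ℕ → ℝ) (hE0 : E 0 = 1)
    (hE : ∀ n : ℕ, 1 ≤ n →
      q * ∑ j ∈ range (n + 1), (n.choose j : ℝ) * E j + E n = 0)
    (Ep : ℕ → ℝ → ℝ)
    (hEp : ∀ (n : ℕ) (x : ℝ),
      Ep n x = ∑ l ∈ range (n + 1), (n.choose l : ℝ) * E (n - l) * x ^ l)
    (k : ℕ) (hk : 1 ≤ k) (x : ℝ) :
    (1 + q) * ∑ j ∈ range (k / 2 + 1), (k.choose (2 * j) : ℝ) * Ep (2 * k - 2 * j) x
      + (q - 1) * ∑ j ∈ range (k / 2 + 1),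
          (k.choose (2 * j + 1) : ℝ) * Ep (2 * k - 2 * j - 1) x
    = (1 + q) * x ^ k * (x - 1) ^ k :=
  stmt_5_general q E hE0 hE Ep hEp k x
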